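/- arXiv:2509.26353 — 3 statements merged into one kernel-verified Lean document; each statement's English description precedes it below -/
import Mathlib

section
/- Let R be a field, f(x) ∈ R[x] irreducible, A := R[x]/(f(x)^n), and M(i) := R[x]/(f(x)^i) viewed as an A-module for 0 ≤ i ≤ n. Let a, b, c, d ∈ {0, 1, ..., n} satisfy b < a < c, b < d < c and a + d = b + c. If X is a finitely generated A-module having no indecomposable direct summand N with b < ℓ(N) < c, and Y := X ⊕ M(b) ⊕ M(c), then there is an add(Y)-split sequence 0 → M(a) → M(b) ⊕ M(c) → M(d) → 0. -/
open Polynomial CategoryTheory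

universe u

namespace Paper

section PolynomialQuotients

/-- The algebra `A = R[x]/(f^N)`. -/
abbrev polyQuot (R : Type u) [CommRing R] (f : R[X]) (N : ℕ) : Type u :=
  R[X] ⧸ Ideal.span {f ^ N}

/-- The `A`-module `M(i) = R[x]/(f^i)`, realized as the quotient of `A = R[x]/(f^N)` by
(the ideal generated by) the image of `f^i`. -/
abbrev polyQuotMod (R : Type u) [CommRing R] (f : R[X]) (N : ℕ) (i : ℕ) : Type u :=
  (polyQuot R f N) ⧸
    (Ideal.span {(Ideal.Quotient.mk (Ideal.span {f ^ N}) f) ^ i} : Ideal (polyQuot R f N))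

end PolynomialQuotients

section Length

/-- The composition length of a module, defined as the Krull dimension of its lattice of
submodules. -/
noncomputable def moduleLength (A : Type u) [Ring A] (M : Type u) [AddCommGroup M]
    [Module A M] : WithBot ℕ∞ :=
  Order.krullDim (Submodule A M)

end Length

section ModuleTheory

variable (A : Type u) [Ring A]

/-- A module is uniserial if its submodules are totally ordered by inclusion. -/
def IsUniserialModule (M : Type u) [AddCommGroup M] [Module A M] : Prop :=
  ∀ p q : Submodule A M, p ≤ q ∨ q ≤ p

/-- A module is indecomposable if it is nonzero and admits no nontrivial direct sum
decomposition. -/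
def IsIndecomposableModule (M : Type u) [AddCommGroup M] [Module A M] : Prop :=
  (∃ m : M, m ≠ 0) ∧ ∀ p q : Submodule A M, IsCompl p q → p = ⊥ ∨ q = ⊥

/-- A ring is a Nakayama algebra if every indecomposable projective module and every
indecomposable injective module is uniserial. -/
def IsNakayamaAlgebra : Prop :=
  ∀ (M : Type u) [AddCommGroup M] [Module A M],
    IsIndecomposableModule A M → (Module.Projective A M ∨ Module.Injective A M) →
      IsUniserialModule A M

end ModuleTheory

section AddSubcategory

variable (A : Type u) [Ring A]

/-- `Z` is a direct summand of `Y`. -/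
def IsDirectSummand (Z Y : Type u) [AddCommGroup Z] [Module A Z]
    [AddCommGroup Y] [Module A Y] : Prop :=
  ∃ (i : Z →ₗ[A] Y) (r : Y →ₗ[A] Z), r.comp i = LinearMap.id

/-- `Z` belongs to `add Y`, i.e. `Z` is (isomorphic to) a direct summand of a finite direct
sum of copies of `Y`. -/
def InAdd (Y : Type u) [AddCommGroup Y] [Module A Y] (Z : Type u) [AddCommGroup Z]
    [Module A Z] : Prop :=
  ∃ k : ℕ, IsDirectSummand A Z (Fin k → Y)

end AddSubcategory

/-!
Write `ϖ` for the image of `f` in `A`. Over the principal ideal domain `R[X]` the module `X`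
is a finite direct sum of cyclic modules `M(e)`, `e ≤ N`, and each `M(e)` with `e ≥ 1` is
uniserial of length `e`, hence indecomposable; so the hypothesis on `X` says that every such `e`
satisfies `e ≤ b` or `c ≤ e`.

The sequence is `g x = (x mod ϖ^b, ϖ^(c-a) x)`, `v (y, z) = ϖ^(d-b) y - (z mod ϖ^d)`, exact
because `c - a = d - b`. A map out of `M(e)` is an element killed by `ϖ^e`, so factoring maps
`M(a) → M(e)` through `g` and maps `M(e) → M(d)` through `v` is divisibility bookkeeping in `A`:
for `e ≤ b`, `ϖ^b` kills `M(e)` and an element of `M(d)` killed by `ϖ^e` is a multiple of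
`ϖ^(d-b)`; for `c ≤ e`, an element of `M(e)` killed by `ϖ^a` is a multiple of `ϖ^(c-a) ϖ^(e-c)`
and `ϖ^e` kills `M(c)`. Both factorization properties pass to finite direct sums and to direct
summands, hence from `M(b)`, `M(c)` and the summands of `X` to all of `add Y`.
-/

section RelativeInjectivity

variable {A : Type*} [Semiring A] {P Q : Type*} [AddCommMonoid P] [Module A P]
  [AddCommMonoid Q] [Module A Q]

def ExtendsAlong (g : P →ₗ[A] Q) (Z : Type*) [AddCommMonoid Z] [Module A Z] : Prop :=
  ∀ h : P →ₗ[A] Z, ∃ t : Q →ₗ[A] Z, t ∘ₗ g = h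

def LiftsThrough (v : Q →ₗ[A] P) (Z : Type*) [AddCommMonoid Z] [Module A Z] : Prop :=
  ∀ h : Z →ₗ[A] P, ∃ t : Z →ₗ[A] Q, v ∘ₗ t = h

variable {Y Z : Type*} [AddCommMonoid Y] [Module A Y] [AddCommMonoid Z] [Module A Z]

namespace ExtendsAlong

variable {g : P →ₗ[A] Q}

theorem of_retract (hY : ExtendsAlong g Y) (i : Z →ₗ[A] Y) (r : Y →ₗ[A] Z)
    (hri : r ∘ₗ i = LinearMap.id) : ExtendsAlong g Z := by
  intro h
  obtain ⟨t, ht⟩ := hY (i ∘ₗ h)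
  refine ⟨r ∘ₗ t, ?_⟩
  rw [LinearMap.comp_assoc, ht, ← LinearMap.comp_assoc, hri, LinearMap.id_comp]

theorem pi {ι : Type*} {Z : ι → Type*} [∀ j, AddCommMonoid (Z j)] [∀ j, Module A (Z j)]
    (hZ : ∀ j, ExtendsAlong g (Z j)) : ExtendsAlong g (∀ j, Z j) := by
  intro h
  choose t ht using fun j => hZ j (LinearMap.proj j ∘ₗ h)
  exact ⟨LinearMap.pi t, LinearMap.ext fun x => funext fun j => LinearMap.congr_fun (ht j) x⟩

theorem prod (hY : ExtendsAlong g Y) (hZ : ExtendsAlong g Z) : ExtendsAlong g (Y × Z) := by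
  intro h
  obtain ⟨t₁, ht₁⟩ := hY (LinearMap.fst A Y Z ∘ₗ h)
  obtain ⟨t₂, ht₂⟩ := hZ (LinearMap.snd A Y Z ∘ₗ h)
  exact ⟨t₁.prod t₂, LinearMap.ext fun x =>
    Prod.ext (LinearMap.congr_fun ht₁ x) (LinearMap.congr_fun ht₂ x)⟩

end ExtendsAlong

namespace LiftsThrough

variable {v : Q →ₗ[A] P}

theorem of_retract (hY : LiftsThrough v Y) (i : Z →ₗ[A] Y) (r : Y →ₗ[A] Z)
    (hri : r ∘ₗ i = LinearMap.id) : LiftsThrough v Z := by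
  intro h
  obtain ⟨t, ht⟩ := hY (h ∘ₗ r)
  refine ⟨t ∘ₗ i, ?_⟩
  rw [← LinearMap.comp_assoc, ht, LinearMap.comp_assoc, hri, LinearMap.comp_id]

theorem pi {ι : Type*} [Fintype ι] [DecidableEq ι] {Z : ι → Type*}
    [∀ j, AddCommMonoid (Z j)] [∀ j, Module A (Z j)] (hZ : ∀ j, LiftsThrough v (Z j)) :
    LiftsThrough v (∀ j, Z j) := by
  intro h
  choose t ht using fun j => hZ j (h ∘ₗ LinearMap.single A Z j)
  refine ⟨LinearMap.lsum A Z ℕ t, LinearMap.pi_ext' fun j => ?_⟩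
  ext x
  rw [LinearMap.comp_apply, LinearMap.comp_apply, LinearMap.coe_single, LinearMap.lsum_piSingle]
  exact LinearMap.congr_fun (ht j) x

theorem prod (hY : LiftsThrough v Y) (hZ : LiftsThrough v Z) : LiftsThrough v (Y × Z) := by
  intro h
  obtain ⟨t₁, ht₁⟩ := hY (h ∘ₗ LinearMap.inl A Y Z)
  obtain ⟨t₂, ht₂⟩ := hZ (h ∘ₗ LinearMap.inr A Y Z)
  exact ⟨t₁.coprod t₂, by rw [LinearMap.comp_coprod, ht₁, ht₂, ← LinearMap.comp_coprod,
    LinearMap.coprod_inl_inr, LinearMap.comp_id]⟩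

end LiftsThrough

end RelativeInjectivity

section AddClosure

variable {A : Type u} [Ring A] {P Q : Type*} [AddCommMonoid P] [Module A P]
  [AddCommMonoid Q] [Module A Q] {Y Z : Type u} [AddCommGroup Y] [Module A Y]
  [AddCommGroup Z] [Module A Z]

theorem ExtendsAlong.of_inAdd {g : P →ₗ[A] Q} (hY : ExtendsAlong g Y) (hZ : InAdd A Y Z) :
    ExtendsAlong g Z :=
  let ⟨_, i, r, hri⟩ := hZ
  (pi fun _ => hY).of_retract i r hri

theorem LiftsThrough.of_inAdd {v : Q →ₗ[A] P} (hY : LiftsThrough v Y) (hZ : InAdd A Y Z) :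
    LiftsThrough v Z :=
  let ⟨_, i, r, hri⟩ := hZ
  (pi fun _ => hY).of_retract i r hri

theorem isDirectSummand_of_linearEquiv_pi {ι : Type*} [DecidableEq ι] {Z : ι → Type u}
    [∀ j, AddCommGroup (Z j)] [∀ j, Module A (Z j)] (e : Y ≃ₗ[A] ∀ j, Z j) (j : ι) :
    IsDirectSummand A (Z j) Y :=
  ⟨e.symm ∘ₗ LinearMap.single A Z j, LinearMap.proj j ∘ₗ e.toLinearMap, by ext; simp⟩

end AddClosure

section CyclicQuotient

variable {A : Type*} [CommRing A] {x : A} {W : Type*} [AddCommGroup W] [Module A W]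

theorem quotient_smul_mk (I : Ideal A) (r s : A) :
    r • Ideal.Quotient.mk I s = Ideal.Quotient.mk I (r * s) :=
  rfl

def quotSpanSingletonLift (w : W) (hw : x • w = 0) : (A ⧸ Ideal.span {x}) →ₗ[A] W :=
  (Ideal.span {x}).liftQ (LinearMap.toSpanSingleton A W w) <| by
    rw [Ideal.span_le]
    rintro _ rfl
    exact hw

@[simp]
theorem quotSpanSingletonLift_mk (w : W) (hw : x • w = 0) (r : A) :
    quotSpanSingletonLift w hw (Ideal.Quotient.mk _ r) = r • w :=
  rfl

@[simp]
theorem quotSpanSingletonLift_one (w : W) (hw : x • w = 0) : quotSpanSingletonLift w hw 1 = w :=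
  one_smul A w

theorem quotSpanSingleton_hom_ext {h₁ h₂ : (A ⧸ Ideal.span {x}) →ₗ[A] W}
    (h : h₁ 1 = h₂ 1) : h₁ = h₂ :=
  Submodule.linearMap_qext _ (LinearMap.ext_ring h)

theorem smul_apply_one_eq_zero (h : (A ⧸ Ideal.span {x}) →ₗ[A] W) : x • h 1 = 0 := by
  rw [← map_smul, Algebra.smul_def, mul_one, Ideal.Quotient.algebraMap_eq,
    Ideal.Quotient.mk_singleton_self, map_zero]

end CyclicQuotient

theorem le_total_of_prime_pow_mem {S : Type*} [CommRing S] [IsDomain S] [IsPrincipalIdealRing S]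
    {p : S} (hp : Prime p) {e : ℕ} {I J : Ideal S} (hI : p ^ e ∈ I) (hJ : p ^ e ∈ J) :
    I ≤ J ∨ J ≤ I := by
  have eq_span_pow : ∀ I : Ideal S, p ^ e ∈ I → ∃ k, I = Ideal.span {p ^ k} := by
    intro I hI
    obtain ⟨g, rfl⟩ := (IsPrincipalIdealRing.principal I).principal
    obtain ⟨k, -, hk⟩ := (dvd_prime_pow hp e).mp (Ideal.mem_span_singleton.mp hI)
    exact ⟨k, Ideal.span_singleton_eq_span_singleton.mpr hk⟩
  obtain ⟨k, rfl⟩ := eq_span_pow I hI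
  obtain ⟨l, rfl⟩ := eq_span_pow J hJ
  simp only [Ideal.span_singleton_le_span_singleton]
  exact (le_total l k).imp (pow_dvd_pow p) (pow_dvd_pow p)

theorem IsUniserialModule.isIndecomposableModule {A : Type u} [Ring A] {M : Type u}
    [AddCommGroup M] [Module A M] [Nontrivial M] (hM : IsUniserialModule A M) :
    IsIndecomposableModule A M :=
  ⟨exists_ne 0, fun p q hpq =>
    (hM p q).imp hpq.disjoint.eq_bot_of_le hpq.disjoint.symm.eq_bot_of_le⟩

theorem associated_pow_and_le_of_pow_dvd_pow {α : Type*} [CommMonoidWithZero α]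
    [IsCancelMulZero α] {p q : α} (hp : Prime p) (hq : Irreducible q) {e n : ℕ}
    (h : p ^ e ∣ q ^ n) :
    Associated (p ^ e) (q ^ e) ∧ e ≤ n := by
  rcases Nat.eq_zero_or_pos e with rfl | he
  · simp
  have hpq : Associated p q :=
    hp.irreducible.associated_of_dvd hq (hp.dvd_of_dvd_pow ((dvd_pow_self p he.ne').trans h))
  exact ⟨hpq.pow_pow,
    (pow_dvd_pow_iff hq.ne_zero hq.not_isUnit).mp (hpq.pow_pow.symm.dvd.trans h)⟩

section PolyQuot

variable {R : Type u} [CommRing R] {f : R[X]} {N : ℕ}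

local notation "𝒜" => polyQuot R f N
local notation "ℳ" => polyQuotMod R f N
local notation "ϖ" => Ideal.Quotient.mk (Ideal.span {f ^ N}) f
local notation "mk" => Ideal.Quotient.mk

theorem map_span_pow (k : ℕ) :
    (Ideal.span {f ^ k}).map (mk (Ideal.span {f ^ N})) = Ideal.span {ϖ ^ k} := by
  rw [Ideal.map_span, Set.image_singleton, map_pow]

theorem pow_dvd_mk_iff {k : ℕ} (hk : k ≤ N) (s : R[X]) : ϖ ^ k ∣ mk _ s ↔ f ^ k ∣ s := by
  rw [← Ideal.mem_span_singleton, ← map_span_pow, Ideal.mem_quotient_iff_mem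
    (Ideal.span_singleton_le_span_singleton.mpr (pow_dvd_pow f hk)), Ideal.mem_span_singleton]

theorem pow_sub_dvd_of_pow_dvd_pow_mul [IsDomain R] (hf : f ≠ 0) {i j : ℕ} (hij : i ≤ j)
    (hjN : j ≤ N) {s : 𝒜} (h : ϖ ^ j ∣ ϖ ^ i * s) : ϖ ^ (j - i) ∣ s := by
  obtain ⟨s, rfl⟩ := Ideal.Quotient.mk_surjective s
  rw [← map_pow (mk _) f i, ← map_mul, pow_dvd_mk_iff hjN, ← Nat.add_sub_of_le hij, pow_add,
    mul_dvd_mul_iff_left (pow_ne_zero _ hf)] at h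
  rwa [pow_dvd_mk_iff ((Nat.sub_le j i).trans hjN)]

noncomputable def polyQuotModEquiv {k : ℕ} (hk : k ≤ N) :
    ℳ k ≃ₗ[R[X]] R[X] ⧸ Ideal.span {f ^ k} :=
  ((Ideal.quotientEquivAlgOfEq R[X] (map_span_pow k)).symm.trans
    (DoubleQuot.quotQuotEquivQuotOfLEₐ R[X]
      (Ideal.span_singleton_le_span_singleton.mpr (pow_dvd_pow f hk)))).toLinearEquiv

variable (R f N) in
noncomputable def mulPow (i j : ℕ) : ℳ i →ₗ[𝒜] ℳ j :=
  quotSpanSingletonLift (mk _ (ϖ ^ (j - i))) <| by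
    rw [quotient_smul_mk, Ideal.Quotient.eq_zero_iff_dvd, ← pow_add]
    exact pow_dvd_pow _ (by omega)

theorem span_pow_le_span_pow {i j : ℕ} (h : j ≤ i) :
    Ideal.span {ϖ ^ i} ≤ Ideal.span {ϖ ^ j} :=
  Ideal.span_singleton_le_span_singleton.mpr (pow_dvd_pow _ h)

variable (R f N) in
noncomputable def diagMap (a b c : ℕ) (hba : b ≤ a) : ℳ a →ₗ[𝒜] ℳ b × ℳ c :=
  (Submodule.factor (span_pow_le_span_pow hba)).prod (mulPow R f N a c)

variable (R f N) in
noncomputable def diffMap (b c d : ℕ) (hdc : d ≤ c) : ℳ b × ℳ c →ₗ[𝒜] ℳ d :=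
  (mulPow R f N b d).coprod (-Submodule.factor (span_pow_le_span_pow hdc))

variable {a b c d : ℕ}

@[simp]
theorem diagMap_mk (hba : b ≤ a) (r : 𝒜) :
    diagMap R f N a b c hba (mk _ r) = (mk _ r, mk _ (ϖ ^ (c - a) * r)) :=
  Prod.ext rfl (congrArg (mk _) (mul_comm r _))

theorem diagMap_one (hba : b ≤ a) : diagMap R f N a b c hba 1 = (1, mk _ (ϖ ^ (c - a))) := by
  rw [← map_one (mk (Ideal.span {ϖ ^ a})), diagMap_mk, mul_one, map_one]

@[simp]
theorem diffMap_mk (hdc : d ≤ c) (y z : 𝒜) :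
    diffMap R f N b c d hdc (mk _ y, mk _ z) = mk _ (ϖ ^ (d - b) * y - z) := by
  rw [diffMap, LinearMap.coprod_apply, LinearMap.neg_apply, ← sub_eq_add_neg, map_sub, mul_comm]
  rfl

theorem diagMap_injective [IsDomain R] (hf : f ≠ 0) (hba : b ≤ a) (hac : a ≤ c)
    (hcN : c ≤ N) : Function.Injective (diagMap R f N a b c hba) := by
  refine (injective_iff_map_eq_zero _).mpr fun x hx => ?_
  obtain ⟨r, rfl⟩ := Ideal.Quotient.mk_surjective x
  rw [diagMap_mk, Prod.mk_eq_zero, Ideal.Quotient.eq_zero_iff_dvd,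
    Ideal.Quotient.eq_zero_iff_dvd] at hx
  have := pow_sub_dvd_of_pow_dvd_pow_mul hf (Nat.sub_le c a) hcN hx.2
  rwa [Nat.sub_sub_self hac, ← Ideal.Quotient.eq_zero_iff_dvd] at this

theorem diffMap_surjective (hdc : d ≤ c) : Function.Surjective (diffMap R f N b c d hdc) := by
  intro z
  obtain ⟨s, rfl⟩ := Ideal.Quotient.mk_surjective z
  exact ⟨(mk _ 0, mk _ (-s)), by rw [diffMap_mk, mul_zero, zero_sub, neg_neg]⟩

theorem range_diagMap_eq_ker_diffMap (hba : b ≤ a) (hbd : b ≤ d) (hdc : d ≤ c)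
    (h : c - a = d - b) :
    LinearMap.range (diagMap R f N a b c hba) = LinearMap.ker (diffMap R f N b c d hdc) := by
  refine le_antisymm (LinearMap.range_le_ker_iff.mpr (quotSpanSingleton_hom_ext ?_)) ?_
  · rw [LinearMap.comp_apply, diagMap_one, ← map_one (mk (Ideal.span {ϖ ^ b})), diffMap_mk,
      mul_one, h, sub_self, map_zero, LinearMap.zero_apply]
  rintro ⟨y, z⟩ hyz
  obtain ⟨y, rfl⟩ := Ideal.Quotient.mk_surjective y
  obtain ⟨z, rfl⟩ := Ideal.Quotient.mk_surjective z
  rw [LinearMap.mem_ker, diffMap_mk, Ideal.Quotient.eq_zero_iff_dvd] at hyz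
  obtain ⟨w, hw⟩ := hyz
  refine ⟨mk _ (y - ϖ ^ b * w), ?_⟩
  rw [diagMap_mk, Prod.mk.injEq, Ideal.Quotient.eq, Ideal.mem_span_singleton]
  refine ⟨⟨-w, by ring⟩, congrArg (mk _) ?_⟩
  rw [h, mul_sub, ← mul_assoc, ← pow_add, Nat.sub_add_cancel hbd]
  linear_combination hw

theorem extendsAlong_diagMap_of_decomp (hba : b ≤ a) {W : Type*} [AddCommGroup W] [Module 𝒜 W]
    (hW : ∀ w : W, ϖ ^ a • w = 0 → ∃ w₁ w₂ : W,
      ϖ ^ b • w₁ = 0 ∧ ϖ ^ c • w₂ = 0 ∧ w = w₁ + ϖ ^ (c - a) • w₂) :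
    ExtendsAlong (diagMap R f N a b c hba) W := by
  intro h
  obtain ⟨w₁, w₂, h₁, h₂, hw⟩ := hW (h 1) (smul_apply_one_eq_zero h)
  refine ⟨(quotSpanSingletonLift w₁ h₁).coprod (quotSpanSingletonLift w₂ h₂),
    quotSpanSingleton_hom_ext ?_⟩
  rw [LinearMap.comp_apply, diagMap_one, LinearMap.coprod_apply, quotSpanSingletonLift_one,
    quotSpanSingletonLift_mk, hw]

theorem extendsAlong_diagMap_polyQuotMod [IsDomain R] (hf : f ≠ 0) (hba : b ≤ a) (hac : a ≤ c)
    {e : ℕ} (heN : e ≤ N) (he : e ≤ b ∨ c ≤ e) :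
    ExtendsAlong (diagMap R f N a b c hba) (ℳ e) := by
  refine extendsAlong_diagMap_of_decomp hba fun w hw => ?_
  obtain ⟨s, rfl⟩ := Ideal.Quotient.mk_surjective w
  rcases he with heb | hce
  · refine ⟨mk _ s, 0, ?_, smul_zero _, by rw [smul_zero, add_zero]⟩
    rw [quotient_smul_mk, Ideal.Quotient.eq_zero_iff_dvd]
    exact dvd_mul_of_dvd_left (pow_dvd_pow _ heb) s
  · rw [quotient_smul_mk, Ideal.Quotient.eq_zero_iff_dvd] at hw
    obtain ⟨u, rfl⟩ := pow_sub_dvd_of_pow_dvd_pow_mul hf (hac.trans hce) heN hw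
    refine ⟨0, mk _ (ϖ ^ (e - c) * u), smul_zero _, ?_, ?_⟩
    · rw [quotient_smul_mk, Ideal.Quotient.eq_zero_iff_dvd, ← mul_assoc, ← pow_add,
        Nat.add_sub_cancel' hce]
      exact dvd_mul_right _ _
    · rw [zero_add, quotient_smul_mk, ← mul_assoc, ← pow_add]
      congr 3
      omega

theorem liftsThrough_diffMap_polyQuotMod [IsDomain R] (hf : f ≠ 0) (hbd : b ≤ d) (hdc : d ≤ c)
    (hdN : d ≤ N) {e : ℕ} (he : e ≤ b ∨ c ≤ e) :
    LiftsThrough (diffMap R f N b c d hdc) (ℳ e) := by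
  intro h
  suffices ∃ y : ℳ b × ℳ c, ϖ ^ e • y = 0 ∧ diffMap R f N b c d hdc y = h 1 by
    obtain ⟨y, hy, hvy⟩ := this
    refine ⟨quotSpanSingletonLift y hy, quotSpanSingleton_hom_ext ?_⟩
    rw [LinearMap.comp_apply, quotSpanSingletonLift_one, hvy]
  obtain ⟨s, hs⟩ := Ideal.Quotient.mk_surjective (h 1)
  have hann := smul_apply_one_eq_zero h
  rw [← hs] at hann ⊢
  rw [quotient_smul_mk, Ideal.Quotient.eq_zero_iff_dvd] at hann
  rcases he with heb | hce
  · obtain ⟨w, rfl⟩ := pow_sub_dvd_of_pow_dvd_pow_mul hf (heb.trans hbd) hdN hann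
    refine ⟨(mk _ (ϖ ^ (b - e) * w), mk _ 0), ?_, ?_⟩
    · rw [Prod.smul_mk, quotient_smul_mk, quotient_smul_mk, mul_zero, map_zero, Prod.mk_eq_zero,
        Ideal.Quotient.eq_zero_iff_dvd, ← mul_assoc, ← pow_add, Nat.add_sub_cancel' heb]
      exact ⟨dvd_mul_right _ _, rfl⟩
    · rw [diffMap_mk, sub_zero, ← mul_assoc, ← pow_add]
      congr 3
      omega
  · refine ⟨(mk _ 0, mk _ (-s)), ?_, ?_⟩
    · rw [Prod.smul_mk, quotient_smul_mk, quotient_smul_mk, mul_zero, map_zero, Prod.mk_eq_zero,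
        Ideal.Quotient.eq_zero_iff_dvd]
      exact ⟨rfl, dvd_mul_of_dvd_left (pow_dvd_pow _ hce) _⟩
    · rw [diffMap_mk, mul_zero, zero_sub, neg_neg]

end PolyQuot

section PolyQuotField

variable {R : Type u} [Field R] {f : R[X]} {N : ℕ}

local notation "𝒜" => polyQuot R f N
local notation "ℳ" => polyQuotMod R f N

theorem length_polyQuotMod (hf : Irreducible f) {e : ℕ} (heN : e ≤ N) :
    Module.length 𝒜 (ℳ e) = e := by
  rw [← Module.length_eq_of_surjective (S := R[X]) Ideal.Quotient.mk_surjective,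
    (polyQuotModEquiv heN).length_eq, ← Ring.ord,
    Ring.ord_pow (mem_nonZeroDivisors_of_ne_zero hf.ne_zero), Ring.ord_of_irreducible hf]
  simp

theorem isUniserialModule_polyQuotMod (hf : Irreducible f) (e : ℕ) :
    IsUniserialModule 𝒜 (ℳ e) := by
  intro p q
  let ψ := Algebra.linearMap R[X] (ℳ e)
  have hψ : Function.Surjective ψ := fun x => by
    obtain ⟨a, rfl⟩ := Ideal.Quotient.mk_surjective x
    obtain ⟨r, rfl⟩ := Ideal.Quotient.mk_surjective a
    exact ⟨r, rfl⟩
  have hψfe : ψ (f ^ e) = 0 := by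
    change Ideal.Quotient.mk _ (Ideal.Quotient.mk _ (f ^ e)) = 0
    rw [map_pow, Ideal.Quotient.eq_zero_iff_mem]
    exact Ideal.mem_span_singleton_self _
  have hfe (p : Submodule 𝒜 (ℳ e)) : f ^ e ∈ (p.restrictScalars R[X]).comap ψ := by
    rw [Submodule.mem_comap, hψfe]
    exact zero_mem _
  rcases le_total_of_prime_pow_mem hf.prime (hfe p) (hfe q) with h | h
  · exact Or.inl ((Submodule.comap_le_comap_iff_of_surjective hψ).mp h)
  · exact Or.inr ((Submodule.comap_le_comap_iff_of_surjective hψ).mp h)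

theorem isIndecomposableModule_polyQuotMod (hf : Irreducible f) {e : ℕ} (he : 1 ≤ e)
    (heN : e ≤ N) : IsIndecomposableModule 𝒜 (ℳ e) :=
  have : Nontrivial (ℳ e) := Module.length_pos_iff.mp (by
    rw [length_polyQuotMod hf heN]
    exact_mod_cast he)
  (isUniserialModule_polyQuotMod hf e).isIndecomposableModule

theorem exists_linearEquiv_pi_polyQuotMod (hf : Irreducible f) (X : Type u) [AddCommGroup X]
    [Module 𝒜 X] [Module.Finite 𝒜 X] :
    ∃ (ι : Type u) (_ : Fintype ι) (e : ι → ℕ),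
      (∀ i, e i ≤ N) ∧ Nonempty (X ≃ₗ[𝒜] ∀ i, ℳ (e i)) := by
  classical
  let : Module R[X] X := Module.compHom X (algebraMap R[X] 𝒜)
  have : IsScalarTower R[X] 𝒜 X := ⟨fun r a x => mul_smul (algebraMap R[X] 𝒜 r) a x⟩
  have : Module.Finite R[X] X := Module.Finite.trans 𝒜 X
  have hfN : ∀ x : X, f ^ N • x = 0 := fun x => by
    rw [← algebraMap_smul 𝒜, Ideal.Quotient.algebraMap_eq, Ideal.Quotient.mk_singleton_self]
    exact zero_smul 𝒜 x
  obtain ⟨ι, _, p, hp, e, ⟨E⟩⟩ := Module.equiv_directSum_of_isTorsion (R := R[X]) (M := X)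
    fun x => ⟨⟨f ^ N, mem_nonZeroDivisors_of_ne_zero (pow_ne_zero N hf.ne_zero)⟩, hfN x⟩
  have hdvd : ∀ i, p i ^ e i ∣ f ^ N := fun i => by
    have := hfN (E.symm (DirectSum.lof R[X] ι _ i 1))
    rw [← map_smul, LinearEquiv.map_eq_zero_iff, ← map_smul] at this
    have h := DirectSum.of_injective (β := fun i => R[X] ⧸ R[X] ∙ p i ^ e i) i
      (this.trans (map_zero _).symm)
    rw [Algebra.smul_def, mul_one, Ideal.Quotient.algebraMap_eq] at h
    exact Ideal.mem_span_singleton.mp (Ideal.Quotient.eq_zero_iff_mem.mp h)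
  choose hassoc heN using fun i => associated_pow_and_le_of_pow_dvd_pow (hp i).prime hf (hdvd i)
  refine ⟨ι, inferInstance, e, heN, ⟨LinearEquiv.extendScalarsOfSurjective
    Ideal.Quotient.mk_surjective (E.trans ((DirectSum.linearEquivFunOnFintype R[X] ι _).trans
      (LinearEquiv.piCongrRight fun i => (Submodule.quotEquivOfEq _ _
        (Ideal.span_singleton_eq_span_singleton.mpr (hassoc i))).trans
          (polyQuotModEquiv (heN i)).symm)))⟩⟩

end PolyQuotField

/-- Let `R` be a field, `f ∈ R[x]` irreducible, `A = R[x]/(f^N)` and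
`M i = R[x]/(f^i)` for `0 ≤ i ≤ N`.  Let `a, b, c, d ≤ N` with `b < a < c`, `b < d < c` and
`a + d = b + c`.  If `X` is a finitely generated `A`-module with no indecomposable direct
summand of composition length strictly between `b` and `c`, and `Y = X ⊕ M b ⊕ M c`, then
there is an `add Y`-split sequence `0 → M a → M b ⊕ M c → M d → 0`. -/
theorem statement12 (R : Type u) [Field R] (f : R[X]) (hf : Irreducible f) (N : ℕ)
    (a b c d : ℕ) (hcN : c ≤ N) (hba : b < a) (hac : a < c) (hbd : b < d) (hdc : d < c)
    (habcd : a + d = b + c)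
    (X : Type u) [AddCommGroup X] [Module (polyQuot R f N) X]
    [Module.Finite (polyQuot R f N) X]
    (hX : ∀ (Z : Type u) [AddCommGroup Z] [Module (polyQuot R f N) Z],
      IsDirectSummand (polyQuot R f N) Z X → IsIndecomposableModule (polyQuot R f N) Z →
        ¬((b : WithBot ℕ∞) < moduleLength (polyQuot R f N) Z ∧
          moduleLength (polyQuot R f N) Z < (c : WithBot ℕ∞))) :
    ∃ (g : polyQuotMod R f N a →ₗ[polyQuot R f N] (polyQuotMod R f N b × polyQuotMod R f N c))
      (v : (polyQuotMod R f N b × polyQuotMod R f N c) →ₗ[polyQuot R f N] polyQuotMod R f N d),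
      Function.Injective g ∧ Function.Surjective v ∧ LinearMap.range g = LinearMap.ker v ∧
      (∀ (Z : Type u) [AddCommGroup Z] [Module (polyQuot R f N) Z],
        InAdd (polyQuot R f N) (X × polyQuotMod R f N b × polyQuotMod R f N c) Z →
          ∀ h : polyQuotMod R f N a →ₗ[polyQuot R f N] Z,
            ∃ t : (polyQuotMod R f N b × polyQuotMod R f N c) →ₗ[polyQuot R f N] Z,
              t.comp g = h) ∧
      (∀ (Z : Type u) [AddCommGroup Z] [Module (polyQuot R f N) Z],
        InAdd (polyQuot R f N) (X × polyQuotMod R f N b × polyQuotMod R f N c) Z →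
          ∀ h : Z →ₗ[polyQuot R f N] polyQuotMod R f N d,
            ∃ t : Z →ₗ[polyQuot R f N] (polyQuotMod R f N b × polyQuotMod R f N c),
              v.comp t = h) := by
  classical
  obtain ⟨ι, _, e, heN, ⟨Q⟩⟩ := exists_linearEquiv_pi_polyQuotMod (N := N) hf X
  have he : ∀ i, e i ≤ b ∨ c ≤ e i := fun i => by
    by_contra! hbc
    refine hX _ (isDirectSummand_of_linearEquiv_pi (Z := fun j => polyQuotMod R f N (e j)) Q i)
      (isIndecomposableModule_polyQuotMod hf (by omega) (heN i)) ?_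
    rw [moduleLength, ← Module.coe_length, length_polyQuotMod hf (heN i)]
    exact_mod_cast hbc
  have hgM {e} (heN : e ≤ N) (he : e ≤ b ∨ c ≤ e) :=
    extendsAlong_diagMap_polyQuotMod hf.ne_zero hba.le hac.le heN he
  have hvM {e} (he : e ≤ b ∨ c ≤ e) :=
    liftsThrough_diffMap_polyQuotMod (R := R) hf.ne_zero hbd.le hdc.le (hdc.le.trans hcN) he
  have hgX : ExtendsAlong _ X :=
    (ExtendsAlong.pi fun i => hgM (heN i) (he i)).of_retract Q.toLinearMap Q.symm.toLinearMap
      Q.symm_comp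
  have hvX : LiftsThrough _ X :=
    (LiftsThrough.pi fun i => hvM (he i)).of_retract Q.toLinearMap Q.symm.toLinearMap
      Q.symm_comp
  have hgY := hgX.prod ((hgM (by omega) (.inl le_rfl)).prod (hgM hcN (.inr le_rfl)))
  have hvY := hvX.prod ((hvM (.inl le_rfl)).prod (hvM (.inr le_rfl)))
  exact ⟨_, _, diagMap_injective hf.ne_zero hba.le hac.le hcN, diffMap_surjective hdc.le,
    range_diagMap_eq_ker_diffMap hba.le hbd.le hdc.le (by omega),
    fun Z _ _ hZ => hgY.of_inAdd hZ, fun Z _ _ hZ => hvY.of_inAdd hZ⟩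

end Paper
end

section
/- Let R be a field and f(x) ∈ R[x] an irreducible separable polynomial, and let K := R[x]/(f(x)). Then K is a separable field extension of R, the algebra A := R[x]/(f(x)^n) admits a K-algebra structure (via a subalgebra of A mapping isomorphically onto A/rad(A) ≅ K), and A ≅ K[y]/(y^n) as K-algebras (in particular as R-algebras). -/
/-!
Since `f` is separable, `K = R[x]/(f)` is étale, hence formally smooth, over `R`. The kernel `(f)`
of `A = R[x]/(f^N) → K` is nilpotent, so this map has an `R`-algebra section `σ : K → A`, which
makes `A` a `K`-algebra. As `A = σ(K) + fA` and `f^N = 0` in `A`, successive approximation shows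
that `A` is generated over `K` by the class of `f`, so `K[y]/(y^N) → A, y ↦ f` is onto; both
sides have dimension `N` over `K`, so it is an isomorphism.
-/

open Polynomial CategoryTheory

universe u

namespace Paper

section PolynomialQuotients

/-- Port repair: the instance search of the current Mathlib no longer finds this (standard)
`CommRing` structure on `(R[X] ⧸ (f))[X]` when it is needed to form a quotient of it. -/
noncomputable instance polyQuotPolynomialCommRing (R : Type u) [Field R] (f : R[X]) :
    CommRing ((R[X] ⧸ Ideal.span {f})[X]) :=
  inferInstance

end PolynomialQuotients

end Paper

theorem AdjoinRoot.isSeparable_of_separable {R : Type*} [Field R] (f : R[X])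
    [Fact (Irreducible f)] (hsep : f.Separable) : Algebra.IsSeparable R (AdjoinRoot f) := by
  have hroot : IsSeparable R (root f) :=
    hsep.of_dvd (minpoly.dvd R _ (AdjoinRoot.aeval_eq f ▸ AdjoinRoot.mk_self))
  have := (IntermediateField.isSeparable_adjoin_simple_iff_isSeparable R _).mpr hroot
  rw [IntermediateField.adjoin_root_eq_top] at this
  exact AlgEquiv.Algebra.isSeparable IntermediateField.topEquiv

noncomputable def Ideal.quotientSpanPowQuotientSpanEquiv (R : Type*) {S : Type*} [CommRing R]
    [CommRing S] [Algebra R S] (a : S) {N : ℕ} (hN : 0 < N) :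
    ((S ⧸ Ideal.span {a ^ N}) ⧸ Ideal.span {Ideal.Quotient.mk (Ideal.span {a ^ N}) a}) ≃ₐ[R]
      S ⧸ Ideal.span {a} :=
  (Ideal.quotientEquivAlgOfEq R (by rw [Ideal.map_span, Set.image_singleton]; rfl)).trans
    (DoubleQuot.quotQuotEquivQuotOfLEₐ R
      (Ideal.span_singleton_le_span_singleton.mpr (dvd_pow_self a hN.ne')))

theorem Algebra.adjoin_singleton_eq_top_of_isNilpotent {K A : Type*} [CommRing K] [CommRing A]
    [Algebra K A] {t : A} (ht : IsNilpotent t)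
    (h : ∀ a : A, ∃ c : K, a - algebraMap K A c ∈ Ideal.span {t}) :
    Algebra.adjoin K {t} = ⊤ := by
  set S := Algebra.adjoin K {t}
  have approx : ∀ (j : ℕ) (a : A), ∃ s ∈ S, ∃ d : A, a = s + d * t ^ j := by
    intro j
    induction j with
    | zero => exact fun a ↦ ⟨0, S.zero_mem, a, by simp⟩
    | succ j ih =>
      intro a
      obtain ⟨s, hs, d, rfl⟩ := ih a
      obtain ⟨c, hc⟩ := h d
      obtain ⟨d', hd'⟩ := Ideal.mem_span_singleton'.mp hc
      have htS : t ∈ S := Algebra.self_mem_adjoin_singleton K t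
      refine ⟨s + algebraMap K A c * t ^ j,
        S.add_mem hs (S.mul_mem (S.algebraMap_mem c) (S.pow_mem htS j)), d', ?_⟩
      linear_combination (-t ^ j) * hd'
  obtain ⟨n, hn⟩ := ht
  refine Algebra.eq_top_iff.mpr fun a ↦ ?_
  obtain ⟨s, hs, d, rfl⟩ := approx n a
  rwa [hn, mul_zero, add_zero]

theorem Algebra.FormallySmooth.exists_section {R K A : Type*} [CommRing R] [CommRing K]
    [Algebra R K] [Algebra.FormallySmooth R K] [CommRing A] [Algebra R A]
    {I : Ideal A} (hI : IsNilpotent I) (e : (A ⧸ I) ≃ₐ[R] K) :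
    ∃ σ : K →ₐ[R] A, ∀ a : A, a - σ (e (Ideal.Quotient.mk I a)) ∈ I := by
  refine ⟨Algebra.FormallySmooth.lift I hI e.symm.toAlgHom, fun a ↦ ?_⟩
  rw [← Ideal.Quotient.eq, Algebra.FormallySmooth.mk_lift]
  simp

theorem exists_isScalarTower_algEquiv_quotient_X_pow {R K A : Type*} [Field R] [Field K]
    [Algebra R K] [Algebra.FormallySmooth R K] [CommRing A] [Algebra R A] [Module.Finite R A]
    {t : A} {N : ℕ} (htN : t ^ N = 0) (e : (A ⧸ Ideal.span {t}) ≃ₐ[R] K)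
    (hA : Module.finrank R A = N * Module.finrank R K) :
    ∃ _ : Algebra K A, IsScalarTower R K A ∧
      Nonempty (A ≃ₐ[K] K[X] ⧸ Ideal.span {(X : K[X]) ^ N}) := by
  have hI : IsNilpotent (Ideal.span {t}) :=
    ⟨N, by rw [Ideal.span_singleton_pow, htN, Ideal.span_singleton_eq_bot.mpr rfl]; rfl⟩
  obtain ⟨σ, hσ⟩ := Algebra.FormallySmooth.exists_section hI e
  let _ : Algebra K A := σ.toAlgebra
  have tower : IsScalarTower R K A := .of_algebraMap_eq' σ.comp_algebraMap.symm
  have haeval : Function.Surjective (aeval t : K[X] →ₐ[K] A) := by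
    rw [← AlgHom.range_eq_top, ← Algebra.adjoin_singleton_eq_range_aeval]
    exact Algebra.adjoin_singleton_eq_top_of_isNilpotent ⟨N, htN⟩ fun a ↦ ⟨_, hσ a⟩
  let φ : K[X] ⧸ Ideal.span {(X : K[X]) ^ N} →ₐ[K] A :=
    Ideal.Quotient.liftₐ _ (aeval t) fun p hp ↦ by
      obtain ⟨q, rfl⟩ := Ideal.mem_span_singleton'.mp hp
      simp [htN]
  have hφ : Function.Surjective φ :=
    Ideal.Quotient.lift_surjective_of_surjective _ _ haeval
  have : Module.Finite K A := .right R K A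
  have : Module.Finite K (K[X] ⧸ Ideal.span {(X : K[X]) ^ N}) :=
    (AdjoinRoot.powerBasis (pow_ne_zero N X_ne_zero)).finite
  have : Module.Finite R K := .equiv e.toLinearEquiv
  have hK : 0 < Module.finrank R K := Module.finrank_pos
  have hdim : Module.finrank K (K[X] ⧸ Ideal.span {(X : K[X]) ^ N}) = Module.finrank K A := by
    rw [finrank_quotient_span_eq_natDegree, natDegree_X_pow]
    have := Module.finrank_mul_finrank R K A
    rw [hA, mul_comm N] at this
    exact (Nat.eq_of_mul_eq_mul_left hK this).symm
  have hφinj : Function.Injective φ :=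
    (LinearMap.injective_iff_surjective_of_finrank_eq_finrank (f := φ.toLinearMap) hdim).mpr hφ
  exact ⟨_, tower, ⟨(AlgEquiv.ofBijective φ ⟨hφinj, hφ⟩).symm⟩⟩

namespace Paper

/-- Let `R` be a field and `f ∈ R[x]` an irreducible separable
polynomial, `K = R[x]/(f)`.  Then `K` is a separable field extension of `R`, the algebra
`A = R[x]/(f^N)` admits a `K`-algebra structure compatible with its `R`-algebra structure,
and `A ≅ K[y]/(y^N)` as `K`-algebras. -/
theorem statement14 (R : Type u) [Field R] (f : R[X]) (hf : Irreducible f)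
    (hsep : f.Separable) (N : ℕ) (hN : 0 < N) :
    IsField (R[X] ⧸ Ideal.span {f}) ∧
    Algebra.IsSeparable R (R[X] ⧸ Ideal.span {f}) ∧
    ∃ alg : Algebra (R[X] ⧸ Ideal.span {f}) (polyQuot R f N),
      letI := alg
      IsScalarTower R (R[X] ⧸ Ideal.span {f}) (polyQuot R f N) ∧
      Nonempty ((polyQuot R f N) ≃ₐ[R[X] ⧸ Ideal.span {f}]
        ((R[X] ⧸ Ideal.span {f})[X] ⧸
          Ideal.span {(X : (R[X] ⧸ Ideal.span {f})[X]) ^ N})) := by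
  have : Fact (Irreducible f) := ⟨hf⟩
  have hsepK := AdjoinRoot.isSeparable_of_separable f hsep
  have : Algebra.FormallySmooth R (AdjoinRoot f) := by
    have := Algebra.FormallyEtale.of_isSeparable R (AdjoinRoot f)
    infer_instance
  have : Module.Finite R (polyQuot R f N) :=
    (AdjoinRoot.powerBasis (pow_ne_zero N hf.ne_zero)).finite
  refine ⟨Field.toIsField (AdjoinRoot f), hsepK, ?_⟩
  refine exists_isScalarTower_algEquiv_quotient_X_pow (K := AdjoinRoot f)
    (A := polyQuot R f N) (t := Ideal.Quotient.mk _ f) ?_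
    (Ideal.quotientSpanPowQuotientSpanEquiv R f hN) ?_
  · rw [← map_pow, Ideal.Quotient.eq_zero_iff_mem]
    exact Ideal.mem_span_singleton_self _
  · rw [finrank_quotient_span_eq_natDegree, natDegree_pow,
      (AdjoinRoot.powerBasis hf.ne_zero).finrank, AdjoinRoot.powerBasis_dim]

end Paper
end

section
/- For an integer s ≥ 2, let m_1 > m_2 > ... > m_s ≥ 1 and n_1 > n_2 > ... > n_s ≥ 1 be integers with m_1 = n_1. Define X := Σ_{k=1}^s ( Σ_{l=1}^k m_k(e_{kl} + e_{lk}) − m_k e_{kk} ) ∈ M_s(ℤ) and Y := Σ_{k=1}^s ( Σ_{l=1}^k n_k(e_{kl} + e_{lk}) − n_k e_{kk} ) ∈ M_s(ℤ) (so the (i,j)-entry of X is m_{max(i,j)} and of Y is n_{max(i,j)}). Then X and Y are congruent in M_s(ℤ) if and only if there is a permutation σ ∈ Σ_s such that (n_1−n_2, ..., n_{s−1}−n_s, n_s) is obtained from (m_1−m_2, ..., m_{s−1}−m_s, m_s) by permuting the entries according to σ. -/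
open Polynomial CategoryTheory Matrix

universe u

/-!
With `L` the lower unitriangular matrix of ones, `X = Lᵀ * diagonal (diffVec m) * L`, so `X` and
`Y` are congruent iff the two diagonal forms of difference vectors are. Over `ℤ`, a diagonal form
`d` congruent to a positive diagonal form `e` is a permutation of it: the least entry `e j₀` is
the minimum of both forms on nonzero integer vectors, so column `j₀` of `H` is `±` a unit vector at
an index `i₀` with `d i₀ = e j₀`; orthogonality to the other columns kills the rest of row `i₀`,
and deleting row `i₀` and column `j₀` leaves a congruence of size `s - 1`.
-/

namespace Paper

def diffVec {s : ℕ} (m : Fin s → ℤ) (i : Fin s) : ℤ :=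
  if h : (i : ℕ) + 1 < s then m i - m ⟨(i : ℕ) + 1, h⟩ else m i

section Congruence

variable {ι R : Type*} [Fintype ι] [DecidableEq ι] [CommRing R]

def Congruent (A B : Matrix ι ι R) : Prop :=
  ∃ H : Matrix ι ι R, IsUnit H ∧ Hᵀ * A * H = B

namespace Congruent

variable {A B C : Matrix ι ι R}

theorem of_isUnit {P : Matrix ι ι R} (hP : IsUnit P) (A : Matrix ι ι R) :
    Congruent A (Pᵀ * A * P) :=
  ⟨P, hP, rfl⟩

theorem symm (h : Congruent A B) : Congruent B A := by
  obtain ⟨H, ⟨u, rfl⟩, rfl⟩ := h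
  refine ⟨↑u⁻¹, Units.isUnit _, ?_⟩
  rw [Matrix.mul_assoc, Matrix.mul_assoc, Units.mul_inv, Matrix.mul_one, ← Matrix.mul_assoc,
    ← transpose_mul, Units.mul_inv, transpose_one, Matrix.one_mul]

theorem trans (hAB : Congruent A B) (hBC : Congruent B C) : Congruent A C := by
  obtain ⟨H, hH, rfl⟩ := hAB
  obtain ⟨K, hK, rfl⟩ := hBC
  exact ⟨H * K, hH.mul hK, by simp only [transpose_mul, Matrix.mul_assoc]⟩

theorem congr_iff {A' B' : Matrix ι ι R} (hA : Congruent A A') (hB : Congruent B B') :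
    Congruent A B ↔ Congruent A' B' :=
  ⟨fun h => hA.symm.trans (h.trans hB), fun h => hA.trans (h.trans hB.symm)⟩

end Congruent

theorem congruent_diagonal_comp (d : ι → R) (σ : Equiv.Perm ι) :
    Congruent (diagonal d) (diagonal (d ∘ σ)) := by
  refine ⟨σ⁻¹.permMatrix R, ?_, ?_⟩
  · rw [isUnit_iff_isUnit_det, det_permutation]
    exact (Equiv.Perm.sign _).isUnit.map (Int.castRingHom R)
  · rw [transpose_permMatrix, inv_inv, PEquiv.toMatrix_toPEquiv_mul,
      PEquiv.mul_toMatrix_toPEquiv, Equiv.Perm.inv_def, Equiv.symm_symm, submatrix_submatrix]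
    exact submatrix_diagonal_equiv d σ

theorem transpose_mul_diagonal_mul_apply (H : Matrix ι ι R) (d : ι → R) (j k : ι) :
    (Hᵀ * diagonal d * H) j k = ∑ i, d i * H i j * H i k := by
  rw [mul_apply]
  simp only [mul_diagonal, transpose_apply]
  exact Finset.sum_congr rfl fun i _ => by ring

theorem exists_ne_zero_of_isUnit [Nontrivial R] {H : Matrix ι ι R} (hH : IsUnit H) (j : ι) :
    ∃ i, H i j ≠ 0 := by
  by_contra! h
  exact not_isUnit_zero (det_eq_zero_of_column_eq_zero j h ▸ (isUnit_iff_isUnit_det H).mp hH)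

end Congruence

section SuccAboveMinor

variable {R : Type*} [CommRing R] {n : ℕ}

theorem isUnit_submatrix_succAbove {H : Matrix (Fin (n + 1)) (Fin (n + 1)) R} (hH : IsUnit H)
    {i₀ j₀ : Fin (n + 1)} (hcol : ∀ i ≠ i₀, H i j₀ = 0) :
    IsUnit (H.submatrix i₀.succAbove j₀.succAbove) := by
  rw [isUnit_iff_isUnit_det] at hH ⊢
  rw [det_succ_column H j₀, Finset.sum_eq_single i₀ (fun i _ hi => by rw [hcol i hi]; ring)
    (by simp)] at hH
  exact isUnit_of_mul_isUnit_right hH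

theorem submatrix_transpose_mul_diagonal_mul_succAbove (H : Matrix (Fin (n + 1)) (Fin (n + 1)) R)
    (d : Fin (n + 1) → R) {i₀ j₀ : Fin (n + 1)} (hrow : ∀ k ≠ j₀, H i₀ k = 0) :
    (H.submatrix i₀.succAbove j₀.succAbove)ᵀ * diagonal (d ∘ i₀.succAbove) *
        H.submatrix i₀.succAbove j₀.succAbove =
      (Hᵀ * diagonal d * H).submatrix j₀.succAbove j₀.succAbove := by
  ext q r
  simp only [transpose_mul_diagonal_mul_apply, submatrix_apply, Fin.sum_univ_succAbove _ i₀,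
    hrow _ (Fin.succAbove_ne j₀ _), mul_zero, zero_add, Function.comp_apply]

end SuccAboveMinor

section PositiveDiagonal

variable {ι : Type*} [Fintype ι] {d x : ι → ℤ} {a : ℤ}

theorem le_sum_mul_sq (ha : 0 ≤ a) (hd : ∀ i, a ≤ d i) (hx : x ≠ 0) :
    a ≤ ∑ i, d i * x i ^ 2 := by
  obtain ⟨i₀, hi₀⟩ := Function.ne_iff.mp hx
  have hx₀ : 1 ≤ x i₀ ^ 2 := (one_le_sq_iff_one_le_abs _).mpr (Int.one_le_abs hi₀)
  calc a ≤ d i₀ * x i₀ ^ 2 := (hd i₀).trans (le_mul_of_one_le_right (ha.trans (hd i₀)) hx₀)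
    _ ≤ ∑ i, d i * x i ^ 2 :=
      Finset.single_le_sum (f := fun i => d i * x i ^ 2)
        (fun i _ => mul_nonneg (ha.trans (hd i)) (sq_nonneg _)) (Finset.mem_univ i₀)

theorem exists_eq_single_of_sum_mul_sq_eq (ha : 0 < a) (hd : ∀ i, a ≤ d i)
    (hsum : ∑ i, d i * x i ^ 2 = a) : ∃ i₀, d i₀ = a ∧ x i₀ ^ 2 = 1 ∧ ∀ i ≠ i₀, x i = 0 := by
  classical
  have hx : x ≠ 0 := by
    rintro rfl
    simp [ha.ne] at hsum
  obtain ⟨i₀, hi₀⟩ := Function.ne_iff.mp hx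
  have hx₀ : 1 ≤ x i₀ ^ 2 := (one_le_sq_iff_one_le_abs _).mpr (Int.one_le_abs hi₀)
  have hterm : ∀ i, 0 ≤ d i * x i ^ 2 := fun i => mul_nonneg (ha.le.trans (hd i)) (sq_nonneg _)
  have hd₀ : 0 < d i₀ := ha.trans_le (hd i₀)
  have hlow : d i₀ ≤ d i₀ * x i₀ ^ 2 := le_mul_of_one_le_right hd₀.le hx₀
  have hsplit := Finset.add_sum_erase Finset.univ (fun i => d i * x i ^ 2) (Finset.mem_univ i₀)
  have hrest : ∑ i ∈ Finset.univ.erase i₀, d i * x i ^ 2 = 0 := by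
    linarith [hd i₀, Finset.sum_nonneg fun i (_ : i ∈ Finset.univ.erase i₀) => hterm i]
  have hdx₀ : d i₀ * x i₀ ^ 2 = a := by linarith
  have hda : d i₀ = a := by linarith [hd i₀]
  refine ⟨i₀, hda, ?_, fun i hi => ?_⟩
  · exact mul_left_cancel₀ hd₀.ne' (by rw [hdx₀, mul_one, hda])
  have := (Finset.sum_eq_zero_iff_of_nonneg fun i _ => hterm i).mp hrest i
    (Finset.mem_erase.mpr ⟨hi, Finset.mem_univ i⟩)
  simpa [(ha.trans_le (hd i)).ne'] using this

theorem exists_congruent_diagonal_succAbove {n : ℕ} {d e : Fin (n + 1) → ℤ}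
    (he : ∀ j, 0 < e j) (h : Congruent (diagonal d) (diagonal e)) :
    ∃ i₀ j₀, d i₀ = e j₀ ∧
      Congruent (diagonal (d ∘ i₀.succAbove)) (diagonal (e ∘ j₀.succAbove)) := by
  obtain ⟨j₀, -, hj₀⟩ := Finset.exists_min_image Finset.univ e Finset.univ_nonempty
  have hemin : ∀ j, e j₀ ≤ e j := fun j => hj₀ j (Finset.mem_univ j)
  have hdmin : ∀ i, e j₀ ≤ d i := by
    obtain ⟨K, hK, hKed⟩ := h.symm
    intro i
    obtain ⟨k, hk⟩ := exists_ne_zero_of_isUnit hK i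
    have hdi : ∑ k, e k * K k i * K k i = d i := by
      rw [← transpose_mul_diagonal_mul_apply, hKed, diagonal_apply_eq]
    rw [← hdi]
    simpa only [sq, mul_assoc] using
      le_sum_mul_sq (he j₀).le hemin (x := fun k => K k i) (Function.ne_iff.mpr ⟨k, hk⟩)
  obtain ⟨H, hH, hHde⟩ := h
  have hentry : ∀ j k, ∑ i, d i * H i j * H i k = diagonal e j k := fun j k => by
    rw [← transpose_mul_diagonal_mul_apply, hHde]
  obtain ⟨i₀, hdi₀, hsq, hcol⟩ := exists_eq_single_of_sum_mul_sq_eq (he j₀) hdmin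
    (x := fun i => H i j₀) (by simpa only [sq, mul_assoc, diagonal_apply_eq] using hentry j₀ j₀)
  have hrow : ∀ k ≠ j₀, H i₀ k = 0 := by
    intro k hk
    have hjk := hentry j₀ k
    rw [Finset.sum_eq_single i₀ (fun i _ hi => by simp [hcol i hi]) (by simp),
      diagonal_apply_ne _ (Ne.symm hk)] at hjk
    have hH₀ : H i₀ j₀ ≠ 0 := by rintro h; simp [h] at hsq
    simpa [hdi₀, (he j₀).ne', hH₀] using hjk
  refine ⟨i₀, j₀, hdi₀, H.submatrix i₀.succAbove j₀.succAbove,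
    isUnit_submatrix_succAbove hH hcol, ?_⟩
  rw [submatrix_transpose_mul_diagonal_mul_succAbove H d hrow, hHde,
    submatrix_diagonal _ _ Fin.succAbove_right_injective]

end PositiveDiagonal

theorem exists_perm_succAbove {n : ℕ} (i₀ j₀ : Fin (n + 1)) (σ : Equiv.Perm (Fin n)) :
    ∃ τ : Equiv.Perm (Fin (n + 1)), τ j₀ = i₀ ∧ ∀ q, τ (j₀.succAbove q) = i₀.succAbove (σ q) :=
  ⟨(finSuccEquiv' j₀).trans ((Equiv.optionCongr σ).trans (finSuccEquiv' i₀).symm),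
    by simp, by simp⟩

theorem exists_perm_of_congruent_diagonal :
    ∀ {s : ℕ} {d e : Fin s → ℤ}, (∀ j, 0 < e j) → Congruent (diagonal d) (diagonal e) →
      ∃ σ : Equiv.Perm (Fin s), e = d ∘ σ
  | 0, _, _, _, _ => ⟨1, funext fun i => i.elim0⟩
  | _ + 1, _, _, he, h => by
    obtain ⟨i₀, j₀, hde, h'⟩ := exists_congruent_diagonal_succAbove he h
    obtain ⟨σ, hσ⟩ := exists_perm_of_congruent_diagonal (fun _ => he _) h'
    obtain ⟨τ, hτ₀, hτ⟩ := exists_perm_succAbove i₀ j₀ σ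
    refine ⟨τ, funext (Fin.succAboveCases j₀ ?_ fun q => ?_)⟩
    · simp [hτ₀, hde]
    · simp [hτ, congrFun hσ q]

theorem sum_Ici_diffVec {s : ℕ} (m : Fin s → ℤ) (j : Fin s) :
    ∑ k ∈ Finset.Ici j, diffVec m k = m j := by
  rw [Finset.Ici_eq_cons_Ioi, Finset.sum_cons, diffVec]
  split_ifs with h
  · have hIoi : Finset.Ioi j = Finset.Ici ⟨j + 1, h⟩ := by
      ext k
      simp only [Finset.mem_Ioi, Finset.mem_Ici, Fin.lt_def, Fin.le_def]
      omega
    rw [hIoi, sum_Ici_diffVec m ⟨j + 1, h⟩]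
    ring
  · have hIoi : Finset.Ioi j = ∅ := by
      ext k
      simp only [Finset.mem_Ioi, Fin.lt_def, Finset.notMem_empty, iff_false]
      omega
    simp [hIoi]
termination_by s - j

theorem diffVec_pos {s : ℕ} {m : Fin s → ℤ} (hm : StrictAnti m) (hpos : ∀ i, 0 < m i)
    (i : Fin s) : 0 < diffVec m i := by
  rw [diffVec]
  split_ifs with h
  · exact sub_pos.mpr (hm (Fin.lt_def.mpr (Nat.lt_succ_self _)))
  · exact hpos i

def lowerOnes (s : ℕ) : Matrix (Fin s) (Fin s) ℤ :=
  of fun k i => if i ≤ k then 1 else 0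

theorem isUnit_lowerOnes (s : ℕ) : IsUnit (lowerOnes s) := by
  rw [isUnit_iff_isUnit_det,
    det_of_isLowerTriangular (lowerOnes s) fun i j (hij : i < j) => if_neg (not_le.mpr hij)]
  simp [lowerOnes]

theorem of_diffVec_max {s : ℕ} (m : Fin s → ℤ) :
    of (fun i j => m (max i j)) = (lowerOnes s)ᵀ * diagonal (diffVec m) * lowerOnes s := by
  ext i j
  rw [transpose_mul_diagonal_mul_apply, of_apply, ← sum_Ici_diffVec m (max i j),
    ← Finset.filter_le_eq_Ici, Finset.sum_filter]
  refine Finset.sum_congr rfl fun k _ => ?_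
  by_cases hi : i ≤ k <;> by_cases hj : j ≤ k <;> simp [lowerOnes, hi, hj]

theorem congruent_diagonal_diffVec {s : ℕ} {m : Fin s → ℤ} {A : Matrix (Fin s) (Fin s) ℤ}
    (hA : ∀ i j, A i j = m (max i j)) : Congruent (diagonal (diffVec m)) A := by
  rw [show A = of fun i j => m (max i j) from ext hA, of_diffVec_max]
  exact .of_isUnit (isUnit_lowerOnes s) _

/-- For `s ≥ 2`, let `m_1 > ⋯ > m_s ≥ 1` and `n_1 > ⋯ > n_s ≥ 1` be
integers with `m_1 = n_1`, and let `X`, `Y` be the integer matrices with entries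
`X i j = m (max i j)`, `Y i j = n (max i j)`.  Then `X` and `Y` are congruent in `M_s(ℤ)` if
and only if the vector of consecutive differences of `n` is a permutation of the vector of
consecutive differences of `m`. -/
theorem statement16 {s : ℕ} (m n : Fin s → ℤ)
    (hn : StrictAnti n)
    (hn1 : ∀ i, 1 ≤ n i)
    (A B : Matrix (Fin s) (Fin s) ℤ)
    (hA : ∀ i j, A i j = m (max i j)) (hB : ∀ i j, B i j = n (max i j)) :
    (∃ H : Matrix (Fin s) (Fin s) ℤ, IsUnit H ∧ Hᵀ * A * H = B) ↔
      ∃ σ : Equiv.Perm (Fin s), ∀ i, diffVec n i = diffVec m (σ i) := by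
  change Congruent A B ↔ _
  rw [← (congruent_diagonal_diffVec hA).congr_iff (congruent_diagonal_diffVec hB)]
  constructor
  · intro h
    obtain ⟨σ, hσ⟩ := exists_perm_of_congruent_diagonal (diffVec_pos hn hn1) h
    exact ⟨σ, congrFun hσ⟩
  · rintro ⟨σ, hσ⟩
    rw [funext hσ]
    exact congruent_diagonal_comp _ σ

end Paper
end
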